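/- Let T be a geodesic triangle on the sphere S_r (r > 0) with side lengths A, B, C and angles θ₁, θ₂, θ₃, and let T′ be a geodesic triangle in the hyperbolic plane (the upper half-plane with its Poincaré metric of constant curvature −1) with the same side lengths A, B, C, with corresponding angles θ₁′, θ₂′, θ₃′ (opposite sides of equal length). Then θᵢ > θᵢ′ for each i ∈ {1,2,3}. -/

import Mathlib

noncomputable section

/-- Points of ℝ³. -/
abbrev E3 := EuclideanSpace ℝ (Fin 3)

/-- Points of the Euclidean plane. -/
abbrev E2 := EuclideanSpace ℝ (Fin 2)

/-- `p` lies on the sphere `S_r` of radius `r` centered at the origin in ℝ³. -/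
def onSphere (r : ℝ) (p : E3) : Prop := ‖p‖ = r

/-- Geodesic (great-circle) distance on the sphere of radius `r`:
`d_r(p,q) = r · arccos(⟪p,q⟫ / r²)`. -/
def sdist (r : ℝ) (p q : E3) : ℝ := r * Real.arccos ((inner ℝ p q : ℝ) / r ^ 2)

/-- The tangent vector at `p` pointing along the minimal geodesic arc from `p`
towards `q` (the component of `q` orthogonal to `p`). -/
def sTangent (p q : E3) : E3 := q - (((inner ℝ q p : ℝ)) / ‖p‖ ^ 2) • p

/-- The spherical angle at vertex `v` between the minimal geodesic arcs `vp` and `vq`,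
i.e. the angle between the tangent directions of the two arcs at `v`; it lies in `[0, π]`. -/
def sAngle (p v q : E3) : ℝ :=
  InnerProductGeometry.angle (sTangent v p) (sTangent v q)

/-- A geodesic triangle on the sphere of radius `r`: three vertices on the sphere,
pairwise neither equal nor antipodal, and not all lying on one great circle
(equivalently, linearly independent in ℝ³). -/
def SphTriangle (r : ℝ) (a b c : E3) : Prop :=
  onSphere r a ∧ onSphere r b ∧ onSphere r c ∧
  a ≠ b ∧ a ≠ c ∧ b ≠ c ∧ a ≠ -b ∧ a ≠ -c ∧ b ≠ -c ∧
  LinearIndependent ℝ ![a, b, c]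

/-- The hyperbolic angle of a geodesic triangle in the upper half-plane (with its
Poincaré metric of constant curvature `−1`, which is the distance carried by Mathlib's
`MetricSpace UpperHalfPlane` instance) at the vertex `z`, between the geodesic sides
from `z` to `w` and from `z` to `u`.  It is computed from the side lengths by the
hyperbolic law of cosines, which agrees with the angle between the initial tangent
vectors of the two sides at `z`. -/
def hypAngle (z w u : UpperHalfPlane) : ℝ :=
  Real.arccos ((Real.cosh (dist z w) * Real.cosh (dist z u) - Real.cosh (dist w u)) /
    (Real.sinh (dist z w) * Real.sinh (dist z u)))

/-- A geodesic triangle in the hyperbolic plane: three points, pairwise distinct and not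
all on a common geodesic; in the hyperbolic plane this is equivalent to the three
pairwise distances satisfying the strict triangle inequality. -/
def HypTriangle (z w u : UpperHalfPlane) : Prop :=
  dist w u < dist z w + dist z u ∧
  dist z u < dist z w + dist w u ∧
  dist z w < dist z u + dist w u

/-!
The spherical and the hyperbolic angle are both compared with the angle of the Euclidean triangle
with the same sides, whose cosine is `t = (β² + γ² - α²) / (2βγ)`. Measuring the spherical sides
on the unit sphere, the spherical and hyperbolic laws of cosines reduce the claim to
`cos α < cos β cos γ + t sin β sin γ` and `cosh α < cosh β cosh γ - t sinh β sinh γ`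
for `|β - γ| < α < β + γ`. As functions of `α` both differences vanish at `|β - γ|` and are
nonnegative at `β + γ` (or at `π`), and their derivatives are `x` times the strictly decreasing
functions `sin x / x - K`, resp. `K - sinh x / x`; the mean value theorem on both sides of `α`
then forbids a nonpositive value at `α`.
-/

open Real Set InnerProductGeometry

namespace Real

theorem mul_cos_lt_sin {x : ℝ} (h0 : 0 < x) (hπ : x < π) : x * cos x < sin x := by
  rcases lt_or_ge x (π / 2) with h | h
  · have hc : 0 < cos x := cos_pos_of_mem_Ioo ⟨by linarith, h⟩
    calc x * cos x < tan x * cos x := mul_lt_mul_of_pos_right (lt_tan h0 h) hc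
      _ = sin x := by rw [tan_eq_sin_div_cos, div_mul_cancel₀ _ hc.ne']
  · have hc : cos x ≤ 0 := cos_nonpos_of_pi_div_two_le_of_le h (by linarith)
    nlinarith [sin_pos_of_pos_of_lt_pi h0 hπ]

theorem strictAntiOn_sin_div : StrictAntiOn (fun x => sin x / x) (Ioc 0 π) := by
  refine strictAntiOn_of_deriv_neg (convex_Ioc 0 π)
    (continuous_sin.continuousOn.div continuousOn_id fun x hx => hx.1.ne') fun x hx => ?_
  rw [interior_Ioc] at hx
  have hd : HasDerivAt (fun x => sin x / x) ((cos x * x - sin x * 1) / x ^ 2) x :=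
    (hasDerivAt_sin x).div (hasDerivAt_id' x) hx.1.ne'
  rw [hd.deriv]
  have := mul_cos_lt_sin hx.1 hx.2
  exact div_neg_of_neg_of_pos (by linarith) (pow_pos hx.1 2)

theorem sinh_lt_mul_cosh {x : ℝ} (hx : 0 < x) : sinh x < x * cosh x := by
  have hmono : StrictMonoOn (fun t => t * cosh t - sinh t) (Ici 0) := by
    refine strictMonoOn_of_deriv_pos (convex_Ici 0) (by fun_prop) fun t ht => ?_
    rw [interior_Ici] at ht
    have hd : HasDerivAt (fun t => t * cosh t - sinh t) (1 * cosh t + t * sinh t - cosh t) t :=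
      ((hasDerivAt_id' t).mul (hasDerivAt_cosh t)).sub (hasDerivAt_sinh t)
    rw [hd.deriv]
    have : 0 < t * sinh t := mul_pos ht (sinh_pos_iff.mpr ht)
    linarith
  simpa using hmono self_mem_Ici hx.le hx

theorem strictMonoOn_sinh_div : StrictMonoOn (fun x => sinh x / x) (Ioi 0) := by
  refine strictMonoOn_of_deriv_pos (convex_Ioi 0)
    (continuous_sinh.continuousOn.div continuousOn_id fun x hx => hx.ne') fun x hx => ?_
  rw [interior_Ioi] at hx
  have hd : HasDerivAt (fun x => sinh x / x) ((cosh x * x - sinh x * 1) / x ^ 2) x :=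
    (hasDerivAt_sinh x).div (hasDerivAt_id' x) (ne_of_gt hx)
  rw [hd.deriv]
  have := sinh_lt_mul_cosh hx
  exact div_pos (by linarith) (pow_pos hx 2)

end Real

theorem pos_of_strictAntiOn_deriv_div {f f' : ℝ → ℝ} {L R x : ℝ} (hL : 0 ≤ L) (hLx : L < x)
    (hxR : x < R) (hfc : ContinuousOn f (Icc L R)) (hf : ∀ y ∈ Ioo L R, HasDerivAt f (f' y) y)
    (hanti : StrictAntiOn (fun y => f' y / y) (Ioo L R)) (hfL : f L = 0) (hfR : 0 ≤ f R) :
    0 < f x := by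
  by_contra! hfx
  obtain ⟨ξ, hξ, hξd⟩ := exists_hasDerivAt_eq_slope f f' hLx
    (hfc.mono (Icc_subset_Icc le_rfl hxR.le)) fun y hy => hf y ⟨hy.1, hy.2.trans hxR⟩
  obtain ⟨η, hη, hηd⟩ := exists_hasDerivAt_eq_slope f f' hxR
    (hfc.mono (Icc_subset_Icc hLx.le le_rfl)) fun y hy => hf y ⟨hLx.trans hy.1, hy.2⟩
  have hξ' : f' ξ / ξ ≤ 0 := by
    rw [hξd, hfL]
    exact div_nonpos_of_nonpos_of_nonneg
      (div_nonpos_of_nonpos_of_nonneg (by linarith) (by linarith [hξ.2])) (by linarith [hξ.1])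
  have hη' : 0 ≤ f' η / η := by
    rw [hηd]
    exact div_nonneg (div_nonneg (by linarith) (by linarith [hη.2])) (by linarith [hη.1])
  have := hanti ⟨hξ.1, hξ.2.trans hxR⟩ ⟨hLx.trans hη.1, hη.2⟩ (hξ.2.trans hη.1)
  linarith

theorem cos_lt_cos_mul_cos_add_sin_mul_sin_mul {α β γ : ℝ} (hα : α < π) (hβ : β < π) (hγ : γ < π)
    (h₁ : α < β + γ) (h₂ : β < α + γ) (h₃ : γ < α + β) :
    cos α < cos β * cos γ + sin β * sin γ * ((β ^ 2 + γ ^ 2 - α ^ 2) / (2 * β * γ)) := by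
  have hβ0 : 0 < β := by linarith
  have hγ0 : 0 < γ := by linarith
  set K := sin β * sin γ / (β * γ) with hK
  have hKβγ : β * γ * K = sin β * sin γ := by rw [hK]; field_simp
  have hKt : sin β * sin γ * ((β ^ 2 + γ ^ 2 - α ^ 2) / (2 * β * γ))
      = K / 2 * (β ^ 2 + γ ^ 2 - α ^ 2) := by rw [hK]; field_simp
  clear_value K
  rw [hKt, ← sub_pos]
  set ψ := fun x => cos β * cos γ + K / 2 * (β ^ 2 + γ ^ 2 - x ^ 2) - cos x
  have hψ : ∀ y, HasDerivAt ψ (sin y - K * y) y := fun y =>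
    ((((hasDerivAt_pow 2 y).const_sub _).const_mul (K / 2)).const_add _ |>.sub
      (hasDerivAt_cos y)).congr_deriv (by ring)
  have hL : |β - γ| < α := abs_sub_lt_iff.mpr ⟨by linarith, by linarith⟩
  -- `sin x / x` decreases only up to `π`, hence the right end point `min (β + γ) π`.
  have hR : min (β + γ) π ≤ π := min_le_right _ _
  refine pos_of_strictAntiOn_deriv_div (abs_nonneg _) hL (lt_min h₁ hα) (f := ψ)
    (fun y _ => (hψ y).continuousAt.continuousWithinAt) (fun y _ => hψ y) ?_ ?_ ?_
  · intro x hx y hy hxy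
    have hx0 : 0 < x := (abs_nonneg _).trans_lt hx.1
    have hy0 : 0 < y := hx0.trans hxy
    have := strictAntiOn_sin_div ⟨hx0, hx.2.le.trans hR⟩ ⟨hy0, hy.2.le.trans hR⟩ hxy
    simp only [sub_div, mul_div_cancel_right₀ _ hx0.ne', mul_div_cancel_right₀ _ hy0.ne']
    linarith
  · simp only [ψ, cos_abs, cos_sub, sq_abs]
    linear_combination hKβγ
  · rcases le_total (β + γ) π with h | h
    · refine le_of_eq ?_
      simp only [ψ, min_eq_left h, cos_add]
      linear_combination hKβγ
    · have hK0 : 0 ≤ K := by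
        rw [← mul_le_mul_iff_right₀ (mul_pos hβ0 hγ0), mul_zero, hKβγ]
        exact (mul_pos (sin_pos_of_pos_of_lt_pi hβ0 hβ) (sin_pos_of_pos_of_lt_pi hγ0 hγ)).le
      have hcos := neg_one_le_cos (β + γ)
      have hmono : K / 2 * -(2 * β * γ) ≤ K / 2 * (β ^ 2 + γ ^ 2 - π ^ 2) :=
        mul_le_mul_of_nonneg_left (by nlinarith [pi_pos]) (by positivity)
      simp only [ψ, min_eq_right h, cos_pi]
      rw [cos_add] at hcos
      linarith

theorem cosh_lt_cosh_mul_cosh_sub_sinh_mul_sinh_mul {α β γ : ℝ}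
    (h₁ : α < β + γ) (h₂ : β < α + γ) (h₃ : γ < α + β) :
    cosh α < cosh β * cosh γ - sinh β * sinh γ * ((β ^ 2 + γ ^ 2 - α ^ 2) / (2 * β * γ)) := by
  have hβ0 : 0 < β := by linarith
  have hγ0 : 0 < γ := by linarith
  set K := sinh β * sinh γ / (β * γ) with hK
  have hKβγ : β * γ * K = sinh β * sinh γ := by rw [hK]; field_simp
  have hKt : sinh β * sinh γ * ((β ^ 2 + γ ^ 2 - α ^ 2) / (2 * β * γ))
      = K / 2 * (β ^ 2 + γ ^ 2 - α ^ 2) := by rw [hK]; field_simp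
  clear_value K
  rw [hKt, ← sub_pos]
  set φ := fun x => cosh β * cosh γ - K / 2 * (β ^ 2 + γ ^ 2 - x ^ 2) - cosh x
  have hφ : ∀ y, HasDerivAt φ (K * y - sinh y) y := fun y =>
    ((((hasDerivAt_pow 2 y).const_sub _).const_mul (K / 2)).const_sub _ |>.sub
      (hasDerivAt_cosh y)).congr_deriv (by ring)
  have hL : |β - γ| < α := abs_sub_lt_iff.mpr ⟨by linarith, by linarith⟩
  refine pos_of_strictAntiOn_deriv_div (abs_nonneg _) hL h₁ (f := φ)
    (fun y _ => (hφ y).continuousAt.continuousWithinAt) (fun y _ => hφ y) ?_ ?_ ?_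
  · intro x hx y hy hxy
    have hx0 : 0 < x := (abs_nonneg _).trans_lt hx.1
    have hy0 : 0 < y := hx0.trans hxy
    have := strictMonoOn_sinh_div hx0 hy0 hxy
    simp only [sub_div, mul_div_cancel_right₀ _ hx0.ne', mul_div_cancel_right₀ _ hy0.ne']
    linarith
  · simp only [φ, cosh_abs, cosh_sub, sq_abs]
    linear_combination -hKβγ
  · refine le_of_eq ?_
    simp only [φ, cosh_add]
    linear_combination -hKβγ

/-- The angle opposite the side `a` in a Euclidean triangle with sides `a`, `b`, `c`
(law of cosines). -/
def euclAngle (a b c : ℝ) : ℝ := arccos ((b ^ 2 + c ^ 2 - a ^ 2) / (2 * b * c))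

theorem euclAngle_mul {r : ℝ} (hr : r ≠ 0) (a b c : ℝ) :
    euclAngle (r * a) (r * b) (r * c) = euclAngle a b c := by
  unfold euclAngle
  congr 1
  rw [show (r * b) ^ 2 + (r * c) ^ 2 - (r * a) ^ 2 = r ^ 2 * (b ^ 2 + c ^ 2 - a ^ 2) by ring,
    show 2 * (r * b) * (r * c) = r ^ 2 * (2 * b * c) by ring,
    mul_div_mul_left _ _ (pow_ne_zero 2 hr)]

theorem HypTriangle.swap {z w u : UpperHalfPlane} (h : HypTriangle z w u) : HypTriangle w z u := by
  obtain ⟨h₁, h₂, h₃⟩ := h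
  rw [HypTriangle, dist_comm w z]
  exact ⟨h₂, h₁, by linarith⟩

theorem HypTriangle.rotate {z w u : UpperHalfPlane} (h : HypTriangle z w u) :
    HypTriangle u z w := by
  obtain ⟨h₁, h₂, h₃⟩ := h
  rw [HypTriangle, dist_comm u z, dist_comm u w]
  exact ⟨by linarith, by linarith, by linarith⟩

theorem hypAngle_lt_euclAngle {z w u : UpperHalfPlane} (h : HypTriangle z w u) :
    hypAngle z w u < euclAngle (dist w u) (dist z w) (dist z u) := by
  obtain ⟨h₁, h₂, h₃⟩ := h
  have hzw : 0 < dist z w := by linarith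
  have hzu : 0 < dist z u := by linarith
  have hsinh : 0 < sinh (dist z w) * sinh (dist z u) :=
    mul_pos (sinh_pos_iff.mpr hzw) (sinh_pos_iff.mpr hzu)
  have hcmp := cosh_lt_cosh_mul_cosh_sub_sinh_mul_sinh_mul h₁ (by linarith) (by linarith)
  have hneg : -1 ≤ (dist z w ^ 2 + dist z u ^ 2 - dist w u ^ 2) / (2 * dist z w * dist z u) := by
    rw [le_div_iff₀ (by positivity)]
    nlinarith [dist_nonneg (x := w) (y := u)]
  have hle : (cosh (dist z w) * cosh (dist z u) - cosh (dist w u)) /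
      (sinh (dist z w) * sinh (dist z u)) ≤ 1 := by
    have hcosh : cosh (dist z w - dist z u) < cosh (dist w u) := by
      rw [cosh_lt_cosh, abs_of_nonneg dist_nonneg, abs_sub_lt_iff]
      constructor <;> linarith
    rw [div_le_one hsinh]
    linarith [cosh_sub (dist z w) (dist z u)]
  refine arccos_lt_arccos hneg ?_ hle
  rw [lt_div_iff₀ hsinh]
  linarith

theorem sdist_eq_mul_angle {r : ℝ} {p q : E3} (hp : ‖p‖ = r) (hq : ‖q‖ = r) :
    sdist r p q = r * angle p q := by
  rw [sdist, angle, hp, hq, sq]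

theorem sdist_comm (r : ℝ) (p q : E3) : sdist r p q = sdist r q p := by
  rw [sdist, sdist, real_inner_comm]

theorem angle_pos_of_norm_eq {V : Type*} [NormedAddCommGroup V] [InnerProductSpace ℝ V]
    {x y : V} (h : ‖x‖ = ‖y‖) (hxy : x ≠ y) : 0 < angle x y := by
  refine (angle_nonneg x y).lt_of_ne' fun h0 => hxy ?_
  have hsmul := inner_eq_norm_mul_iff_real.mp (inner_eq_mul_norm_of_angle_eq_zero h0)
  rw [h] at hsmul
  rcases eq_or_ne ‖y‖ 0 with hy | hy
  · rw [norm_eq_zero.mp hy, norm_eq_zero.mp (h.trans hy)]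
  · exact smul_right_injective V hy hsmul

theorem angle_lt_pi_of_norm_eq {V : Type*} [NormedAddCommGroup V] [InnerProductSpace ℝ V]
    {x y : V} (h : ‖x‖ = ‖y‖) (hxy : x ≠ -y) : angle x y < π := by
  have := angle_pos_of_norm_eq (h.trans (norm_neg y).symm) hxy
  rw [angle_neg_right] at this
  linarith

theorem inner_sTangent (a b c : E3) :
    inner ℝ (sTangent a b) (sTangent a c) = inner ℝ b c - inner ℝ a b * inner ℝ a c / ‖a‖ ^ 2 := by
  rcases eq_or_ne a 0 with rfl | ha
  · simp [sTangent]
  have ha2 : ‖a‖ ^ 2 ≠ 0 := pow_ne_zero 2 (norm_ne_zero_iff.mpr ha)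
  simp only [sTangent, inner_sub_left, inner_sub_right, real_inner_smul_left,
    real_inner_smul_right, real_inner_self_eq_norm_sq, real_inner_comm a]
  field_simp
  ring

theorem norm_sTangent {a : E3} (ha : a ≠ 0) (b : E3) : ‖sTangent a b‖ = ‖b‖ * sin (angle a b) := by
  have ha' : 0 < ‖a‖ := norm_pos_iff.mpr ha
  have hsq : ‖sTangent a b‖ ^ 2 = ‖b‖ ^ 2 - inner ℝ a b ^ 2 / ‖a‖ ^ 2 := by
    rw [← real_inner_self_eq_norm_sq, inner_sTangent, real_inner_self_eq_norm_sq]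
    ring
  refine mul_left_cancel₀ ha'.ne' ?_
  calc ‖a‖ * ‖sTangent a b‖ = √((‖a‖ * ‖sTangent a b‖) ^ 2) := (sqrt_sq (by positivity)).symm
    _ = √(inner ℝ a a * inner ℝ b b - inner ℝ a b * inner ℝ a b) := by
      rw [mul_pow, hsq, real_inner_self_eq_norm_sq, real_inner_self_eq_norm_sq]
      field_simp
    _ = ‖a‖ * (‖b‖ * sin (angle a b)) := by rw [← sin_angle_mul_norm_mul_norm]; ring

theorem law_cos_sAngle {a b c : E3} (ha : a ≠ 0) (hb : b ≠ 0) (hc : c ≠ 0) :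
    cos (angle b c) = cos (angle a b) * cos (angle a c) +
      sin (angle a b) * sin (angle a c) * cos (sAngle b a c) := by
  have hθ := cos_angle_mul_norm_mul_norm (sTangent a b) (sTangent a c)
  rw [norm_sTangent ha, norm_sTangent ha, inner_sTangent, ← cos_angle_mul_norm_mul_norm a b,
    ← cos_angle_mul_norm_mul_norm a c, ← cos_angle_mul_norm_mul_norm b c] at hθ
  field_simp at hθ
  unfold sAngle
  linear_combination -hθ

theorem euclAngle_lt_sAngle {a b c : E3} (ha : a ≠ 0) (hb : b ≠ 0) (hc : c ≠ 0)
    (hα : angle b c < π) (hβ : angle a b < π) (hγ : angle a c < π)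
    (h₁ : angle b c < angle a b + angle a c) (h₂ : angle a b < angle b c + angle a c)
    (h₃ : angle a c < angle b c + angle a b) :
    euclAngle (angle b c) (angle a b) (angle a c) < sAngle b a c := by
  have hsin : 0 < sin (angle a b) * sin (angle a c) :=
    mul_pos (sin_pos_of_pos_of_lt_pi (by linarith) hβ) (sin_pos_of_pos_of_lt_pi (by linarith) hγ)
  have hcmp := cos_lt_cos_mul_cos_add_sin_mul_sin_mul hα hβ hγ h₁ h₂ h₃
  rw [law_cos_sAngle ha hb hc, add_lt_add_iff_left, mul_lt_mul_iff_right₀ hsin] at hcmp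
  have hle : ((angle a b) ^ 2 + (angle a c) ^ 2 - (angle b c) ^ 2) /
      (2 * angle a b * angle a c) ≤ 1 := by
    rw [div_le_one (by nlinarith)]
    nlinarith
  calc euclAngle (angle b c) (angle a b) (angle a c) < arccos (cos (sAngle b a c)) :=
        arccos_lt_arccos (neg_one_le_cos _) hcmp hle
    _ = sAngle b a c := arccos_cos (angle_nonneg _ _) (angle_le_pi _ _)

theorem hypAngle_lt_sAngle {r : ℝ} (hr : 0 < r) {a b c : E3} (ha : ‖a‖ = r) (hb : ‖b‖ = r)
    (hc : ‖c‖ = r) (hab : a ≠ -b) (hac : a ≠ -c) (hbc : b ≠ -c)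
    {z w u : UpperHalfPlane} (htri : HypTriangle z w u) (hA : sdist r b c = dist w u)
    (hB : sdist r a c = dist z u) (hC : sdist r a b = dist z w) :
    hypAngle z w u < sAngle b a c := by
  rw [sdist_eq_mul_angle hb hc] at hA
  rw [sdist_eq_mul_angle ha hc] at hB
  rw [sdist_eq_mul_angle ha hb] at hC
  have hne (p : E3) (hp : ‖p‖ = r) : p ≠ 0 := norm_ne_zero_iff.mp (hp ▸ hr.ne')
  have hcancel (x y z : ℝ) (h : r * x < r * y + r * z) : x < y + z := by
    rw [← mul_add] at h
    exact lt_of_mul_lt_mul_left h hr.le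
  calc hypAngle z w u < euclAngle (dist w u) (dist z w) (dist z u) := hypAngle_lt_euclAngle htri
    _ = euclAngle (angle b c) (angle a b) (angle a c) := by
      rw [← hA, ← hB, ← hC, euclAngle_mul hr.ne']
    _ < sAngle b a c := by
      obtain ⟨h₁, h₂, h₃⟩ := htri
      rw [← hA, ← hB, ← hC] at h₁ h₂ h₃
      exact euclAngle_lt_sAngle (hne a ha) (hne b hb) (hne c hc)
        (angle_lt_pi_of_norm_eq (hb.trans hc.symm) hbc)
        (angle_lt_pi_of_norm_eq (ha.trans hb.symm) hab)
        (angle_lt_pi_of_norm_eq (ha.trans hc.symm) hac)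
        (hcancel _ _ _ h₁) (hcancel _ _ _ (by linarith)) (hcancel _ _ _ (by linarith))

/-- **Corollary 7 with curvatures `κ = 1/r²`, `κ' = −1`** (via Toponogov's Comparison
Theorem): redrawing a spherical triangle with the same side lengths in the hyperbolic
plane strictly decreases every angle.  Here `T = △abc` is a geodesic triangle on the
sphere `S_r` with side lengths `A = d_r(b,c)`, `B = d_r(a,c)`, `C = d_r(a,b)` and angles
`θ₁, θ₂, θ₃` at `a, b, c`, and `T' = △zwu` is a geodesic triangle in the upper
half-plane with the same side lengths, with corresponding angles `θ₁', θ₂', θ₃'`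
(opposite sides of equal length).  Then `θᵢ > θᵢ'` for each `i`. -/
theorem spherical_angles_gt_hyperbolic_angles (r : ℝ) (hr : 0 < r)
    (a b c : E3) (htri : SphTriangle r a b c)
    (z w u : UpperHalfPlane) (htri' : HypTriangle z w u)
    (hA : sdist r b c = dist w u)
    (hB : sdist r a c = dist z u)
    (hC : sdist r a b = dist z w) :
    sAngle b a c > hypAngle z w u ∧
    sAngle a b c > hypAngle w z u ∧
    sAngle a c b > hypAngle u z w := by
  obtain ⟨ha, hb, hc, -, -, -, hab', hac', hbc', -⟩ := htri
  have hneg {p q : E3} (h : p ≠ -q) : q ≠ -p := fun h' => h (neg_eq_iff_eq_neg.mpr h').symm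
  refine ⟨?_, ?_, ?_⟩
  · exact hypAngle_lt_sAngle hr ha hb hc hab' hac' hbc' htri' hA hB hC
  · exact hypAngle_lt_sAngle hr hb ha hc (hneg hab') hbc' hac' htri'.swap hB hA
      (by rw [sdist_comm, hC, dist_comm])
  · exact hypAngle_lt_sAngle hr hc ha hb (hneg hac') (hneg hbc') hab'
      htri'.rotate hC (by rw [sdist_comm, hA, dist_comm]) (by rw [sdist_comm, hB, dist_comm])
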